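/- Let m_1, ..., m_N ∈ ℝ³ with ‖m_k‖ ≤ 1 and suppose Σ_{a ∈ {0,1}^N} ‖Σ_k (-1)^{a_k} m_k‖ ≤ 2^N. Then the N binary qubit POVMs M_{±|y} = (I ± m_y·σ)/2 are jointly measurable: there exists a single POVM {E_λ} and conditional probability distributions p(b|y,λ) such that M_{b|y} = Σ_λ p(b|y,λ) E_λ for all y and b ∈ {±}. -/

import Mathlib

open scoped Matrix ComplexOrder

/-- The three Pauli matrices `σ_x, σ_y, σ_z`. -/
noncomputable def pauli : Fin 3 → Matrix (Fin 2) (Fin 2) ℂ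
  | 0 => !![0, 1; 1, 0]
  | 1 => !![0, -Complex.I; Complex.I, 0]
  | 2 => !![1, 0; 0, -1]

/-- The Pauli combination `w·σ = w₁σ_x + w₂σ_y + w₃σ_z` of a real 3-vector. -/
noncomputable def pauliDot (w : EuclideanSpace ℝ (Fin 3)) : Matrix (Fin 2) (Fin 2) ℂ :=
  ∑ i : Fin 3, (w i : ℂ) • pauli i

lemma pauliDot_eq (w : EuclideanSpace ℝ (Fin 3)) :
    pauliDot w = !![(w 2 : ℂ), (w 0 : ℂ) - (w 1 : ℂ) * Complex.I;
                    (w 0 : ℂ) + (w 1 : ℂ) * Complex.I, -(w 2 : ℂ)] := by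
  simp [pauliDot, pauli, Fin.sum_univ_three]
  ring

lemma pauliDot_smul (r : ℝ) (v : EuclideanSpace ℝ (Fin 3)) :
    pauliDot (r • v) = (r : ℂ) • pauliDot v := by
  simp only [pauliDot, Finset.smul_sum, smul_smul, PiLp.smul_apply, smul_eq_mul,
    Complex.ofReal_mul]

lemma pauliDot_add (u v : EuclideanSpace ℝ (Fin 3)) :
    pauliDot (u + v) = pauliDot u + pauliDot v := by
  simp [pauliDot, ← Finset.sum_add_distrib, add_smul]

lemma pauliDot_zero : pauliDot 0 = 0 := by
  simp [pauliDot]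

lemma pauliDot_sum {ι : Type*} (s : Finset ι) (f : ι → EuclideanSpace ℝ (Fin 3)) :
    pauliDot (∑ a ∈ s, f a) = ∑ a ∈ s, pauliDot (f a) := by
  classical
  induction s using Finset.induction with
  | empty => simp [pauliDot_zero]
  | insert _ _ h ih => rw [Finset.sum_insert h, Finset.sum_insert h, ← ih, pauliDot_add]

lemma key_ineq (x y z a b e d c : ℝ) (h : x^2+y^2+z^2 ≤ c^2) (hc : 0 ≤ c) :
    0 ≤ c*(a^2+b^2+e^2+d^2) + z*(a^2+b^2-e^2-d^2)
      + 2*(x*(a*e+b*d) + y*(a*d-b*e)) := by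
  set S := a^2+b^2+e^2+d^2 with hSdef
  set D := a^2+b^2-e^2-d^2 with hDdef
  set P := a*e+b*d with hPdef
  set Q := a*d-b*e with hQdef
  have hS : 0 ≤ S := by positivity
  have hid : D^2 + 4*P^2 + 4*Q^2 = S^2 := by rw [hSdef, hDdef, hPdef, hQdef]; ring
  have hCS : (z*D + 2*x*P + 2*y*Q)^2 ≤ (x^2+y^2+z^2) * (D^2+4*P^2+4*Q^2) := by
    nlinarith [sq_nonneg (x*D-2*z*P), sq_nonneg (y*D-2*z*Q), sq_nonneg (2*x*Q-2*y*P)]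
  have h2 : (z*D + 2*x*P + 2*y*Q)^2 ≤ (c*S)^2 := by
    calc (z*D + 2*x*P + 2*y*Q)^2 ≤ (x^2+y^2+z^2) * (D^2+4*P^2+4*Q^2) := hCS
    _ ≤ c^2 * S^2 := by rw [hid]; apply mul_le_mul_of_nonneg_right h (by positivity)
    _ = (c*S)^2 := by ring
  have hcS : 0 ≤ c * S := mul_nonneg hc hS
  nlinarith [h2, hcS]

lemma posSemidef_smul_one_add_pauliDot (c : ℝ) (v : EuclideanSpace ℝ (Fin 3)) (h : ‖v‖ ≤ c) :
    Matrix.PosSemidef ((c : ℂ) • (1 : Matrix (Fin 2) (Fin 2) ℂ) + pauliDot v) := by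
  have hc : 0 ≤ c := le_trans (norm_nonneg v) h
  have hv : v 0 ^ 2 + v 1 ^ 2 + v 2 ^ 2 ≤ c ^ 2 := by
    have h1 : ‖v‖ ^ 2 ≤ c ^ 2 := pow_le_pow_left₀ (norm_nonneg v) h 2
    have h2 : ‖v‖ ^ 2 = v 0 ^ 2 + v 1 ^ 2 + v 2 ^ 2 := by
      rw [EuclideanSpace.norm_eq, Real.sq_sqrt (by positivity)]
      simp [Fin.sum_univ_three, sq_abs]
    linarith
  rw [Matrix.posSemidef_iff_dotProduct_mulVec]
  constructor
  · rw [pauliDot_eq]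
    ext i j
    fin_cases i <;> fin_cases j <;>
      simp [Matrix.conjTranspose_apply, Complex.ext_iff]
  · intro x
    have hA : ((c : ℂ) • (1 : Matrix (Fin 2) (Fin 2) ℂ) + pauliDot v) =
        !![(c : ℂ) + (v 2 : ℂ), (v 0 : ℂ) - (v 1 : ℂ) * Complex.I;
           (v 0 : ℂ) + (v 1 : ℂ) * Complex.I, (c : ℂ) - (v 2 : ℂ)] := by
      rw [pauliDot_eq]
      ext i j
      fin_cases i <;> fin_cases j <;> simp [Matrix.one_apply] <;> ring
    rw [hA]
    simp [dotProduct, Matrix.mulVec, Fin.sum_univ_two]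
    rw [Complex.le_def]
    have key := key_ineq (v 0) (v 1) (v 2) (x 0).re (x 0).im (x 1).re (x 1).im c hv hc
    constructor
    · simp only [Complex.add_re, Complex.mul_re, Complex.mul_im, Complex.add_im, Complex.sub_re,
        Complex.sub_im, Complex.neg_re, Complex.neg_im, Complex.star_def, Complex.conj_re,
        Complex.conj_im, Complex.ofReal_re, Complex.ofReal_im, Complex.I_re, Complex.I_im,
        Complex.zero_re, Complex.zero_im]
      ring_nf
      ring_nf at key
      linarith
    · simp only [Complex.add_re, Complex.mul_re, Complex.mul_im, Complex.add_im, Complex.sub_re,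
        Complex.sub_im, Complex.neg_re, Complex.neg_im, Complex.star_def, Complex.conj_re,
        Complex.conj_im, Complex.ofReal_re, Complex.ofReal_im, Complex.I_re, Complex.I_im,
        Complex.zero_re, Complex.zero_im]
      ring

lemma sign_sum_orthogonal (N : ℕ) (m : Fin N → EuclideanSpace ℝ (Fin 3)) (y : Fin N) :
    ∑ a : Fin N → Bool, (if a y then (-1:ℝ) else 1) •
      (∑ k : Fin N, (if a k then (-1:ℝ) else 1) • m k) = (2^N : ℝ) • m y := by
  classical
  have expand : ∀ a : Fin N → Bool,
      (if a y then (-1:ℝ) else 1) • ∑ k : Fin N, (if a k then (-1:ℝ) else 1) • m k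
      = ∑ k : Fin N, ((if a y then (-1:ℝ) else 1) * (if a k then (-1:ℝ) else 1)) • m k := by
    intro a
    rw [Finset.smul_sum]
    simp [smul_smul]
  rw [Finset.sum_congr rfl fun a _ => expand a, Finset.sum_comm]
  have hk : ∀ k : Fin N,
      (∑ a : Fin N → Bool, (if a y then (-1:ℝ) else 1) * (if a k then (-1:ℝ) else 1))
        = if k = y then (2^N : ℝ) else 0 := by
    intro k
    by_cases hky : k = y
    · subst hky
      have : ∀ a : Fin N → Bool,
          (if a k then (-1:ℝ) else 1) * (if a k then (-1:ℝ) else 1) = 1 := by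
        intro a; by_cases h : a k <;> simp [h]
      rw [Finset.sum_congr rfl fun a _ => this a]
      simp [Finset.card_univ]
    · rw [if_neg hky]
      apply Finset.sum_ninvolution (g := fun a => Function.update a k (!(a k)))
      · intro a
        have h1 : Function.update a k (!(a k)) y = a y :=
          Function.update_of_ne (fun h => hky h.symm) _ _
        have h2 : Function.update a k (!(a k)) k = !(a k) := Function.update_self _ _ _
        rw [h1, h2]
        by_cases h : a k <;> by_cases h' : a y <;> simp [h, h']
      · intro a _ hcontra
        have := congrFun hcontra k
        rw [Function.update_self] at this
        exact (Bool.not_ne_self (a k)) this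
      · intro a; exact Finset.mem_univ _
      · intro a
        funext j
        by_cases hj : j = k
        · subst hj
          simp [Function.update_self]
        · simp [Function.update_of_ne hj]
  have inner : ∀ k : Fin N,
      ∑ a : Fin N → Bool, ((if a y then (-1:ℝ) else 1) * (if a k then (-1:ℝ) else 1)) • m k
        = (if k = y then (2^N : ℝ) else 0) • m k := by
    intro k; rw [← Finset.sum_smul, hk k]
  rw [Finset.sum_congr rfl fun k _ => inner k]
  simp

/-- If `m₁,...,m_N ∈ ℝ³` satisfy `‖m_k‖ ≤ 1` and
`∑_{a ∈ {0,1}^N} ‖∑_k (-1)^{a_k} m_k‖ ≤ 2^N`, then the `N` binary qubit POVMs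
`M_{±|y} = (I ± m_y·σ)/2` are jointly measurable: there is a single parent POVM
`{E_λ}` and conditional probabilities `p(b|y,λ)` with
`M_{b|y} = ∑_λ p(b|y,λ) • E_λ`. -/
theorem qubit_binary_jointly_measurable
    (N : ℕ) (m : Fin N → EuclideanSpace ℝ (Fin 3))
    (hm : ∀ k, ‖m k‖ ≤ 1)
    (hcond : ∑ a : Fin N → Bool,
        ‖∑ k : Fin N, (if a k then (-1 : ℝ) else 1) • m k‖ ≤ 2 ^ N)
    (M : Bool → Fin N → Matrix (Fin 2) (Fin 2) ℂ)
    (hM : ∀ b y, M b y = (1 / 2 : ℂ) •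
        ((1 : Matrix (Fin 2) (Fin 2) ℂ)
          + ((if b then 1 else -1 : ℂ)) • pauliDot (m y))) :
    ∃ (L : ℕ) (E : Fin L → Matrix (Fin 2) (Fin 2) ℂ) (p : Bool → Fin N → Fin L → ℝ),
      (∀ lam, (E lam).PosSemidef) ∧
      (∑ lam : Fin L, E lam = 1) ∧
      (∀ b y lam, 0 ≤ p b y lam) ∧
      (∀ y lam, ∑ b : Bool, p b y lam = 1) ∧
      (∀ b y, M b y = ∑ lam : Fin L, ((p b y lam : ℝ) : ℂ) • E lam) := by
  classical
  set w : (Fin N → Bool) → EuclideanSpace ℝ (Fin 3) :=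
    fun a => ∑ k : Fin N, (if a k then (-1:ℝ) else 1) • m k with hwdef
  set S : ℝ := ∑ a : Fin N → Bool, ‖w a‖ with hSdef
  have hS0 : 0 ≤ S := Finset.sum_nonneg fun a _ => norm_nonneg _
  have hS2 : S ≤ 2^N := hcond
  have horth : ∀ y : Fin N,
      ∑ a : Fin N → Bool, (if a y then (-1:ℝ) else 1) • w a = (2^N : ℝ) • m y :=
    fun y => sign_sum_orthogonal N m y
  by_cases hS : S = 0
  · -- all m y = 0, trivial parent POVM
    have hwa : ∀ a : Fin N → Bool, w a = 0 := by
      intro a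
      have := (Finset.sum_eq_zero_iff_of_nonneg
        (fun a (_ : a ∈ Finset.univ) => norm_nonneg (w a))).1 hS a (Finset.mem_univ a)
      exact norm_eq_zero.mp this
    have hmy : ∀ y, m y = 0 := by
      intro y
      have h1 : (2^N : ℝ) • m y = 0 := by
        rw [← horth y]
        exact Finset.sum_eq_zero fun a _ => by rw [hwa a, smul_zero]
      have h2 : (2^N : ℝ) ≠ 0 := by positivity
      exact (smul_eq_zero.mp h1).resolve_left h2
    refine ⟨1, fun _ => 1, fun _ _ _ => 1/2, fun _ => Matrix.PosSemidef.one, by simp,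
      fun _ _ _ => by norm_num, fun _ _ => by simp, ?_⟩
    intro b y
    rw [hM b y, hmy y, pauliDot_zero]
    simp
  · have hSpos : 0 < S := lt_of_le_of_ne hS0 (Ne.symm hS)
    set t : ℝ := S / 2^N with htdef
    have h2N : (0:ℝ) < 2^N := by positivity
    have ht0 : 0 ≤ t := div_nonneg hS0 h2N.le
    have ht1 : t ≤ 1 := (div_le_one h2N).mpr hS2
    have htS : t * 2^N = S := div_mul_cancel₀ S h2N.ne'
    set Ef : Bool × (Fin N → Bool) → Matrix (Fin 2) (Fin 2) ℂ :=
      fun εa => ((‖w εa.2‖ / (2*S) : ℝ) : ℂ) • 1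
        + (((if εa.1 then 1 else -1) / (2*S) : ℝ) : ℂ) • pauliDot (w εa.2) with hEfdef
    set pf : Bool → Fin N → Bool × (Fin N → Bool) → ℝ :=
      fun b y εa =>
        (1 + (if b then 1 else (-1:ℝ)) * (if εa.1 then 1 else -1)
          * (if εa.2 y then -1 else 1) * t) / 2 with hpfdef
    set L : ℕ := Fintype.card (Bool × (Fin N → Bool)) with hLdef
    set e : Bool × (Fin N → Bool) ≃ Fin L := Fintype.equivFin _ with hedef
    have hpsd : ∀ εa : Bool × (Fin N → Bool), (Ef εa).PosSemidef := by
      rintro ⟨ε, a⟩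
      have hrw : Ef (ε, a) = ((‖w a‖ / (2*S) : ℝ) : ℂ) • 1
          + pauliDot ((((if ε then 1 else -1) / (2*S)) : ℝ) • w a) := by
        rw [pauliDot_smul]
      rw [hrw]
      apply posSemidef_smul_one_add_pauliDot
      rw [norm_smul]
      have hn : ‖((if ε then 1 else (-1:ℝ)) / (2*S))‖ = 1 / (2*S) := by
        have h2Spos : (0:ℝ) < 2*S := by positivity
        cases ε <;> simp [Real.norm_eq_abs, abs_div, abs_of_pos h2Spos] <;> linarith
      rw [hn, div_mul_eq_mul_div, one_mul]
    have hpos : ∀ (b : Bool) (y : Fin N) (εa : Bool × (Fin N → Bool)), 0 ≤ pf b y εa := by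
      rintro b y ⟨ε, a⟩
      have h1 : (if b then 1 else (-1:ℝ)) * (if ε then 1 else -1) * (if a y then -1 else 1) = 1
          ∨ (if b then 1 else (-1:ℝ)) * (if ε then 1 else -1) * (if a y then -1 else 1) = -1 := by
        by_cases hb : b <;> by_cases he : ε <;> by_cases ha : a y <;> simp [hb, he, ha]
      show 0 ≤ (1 + (if b then 1 else (-1:ℝ)) * (if ε then 1 else -1)
          * (if a y then -1 else 1) * t) / 2
      rcases h1 with h | h <;> rw [h] <;> nlinarith
    have hones : ∀ (y : Fin N) (εa : Bool × (Fin N → Bool)), ∑ b : Bool, pf b y εa = 1 := by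
      rintro y ⟨ε, a⟩
      rw [Fintype.sum_bool]
      show (1 + (1:ℝ) * (if ε then 1 else -1) * (if a y then -1 else 1) * t) / 2
        + (1 + (-1:ℝ) * (if ε then 1 else -1) * (if a y then -1 else 1) * t) / 2 = 1
      ring
    have hsum1 : ∑ i : Bool × (Fin N → Bool), Ef i = 1 := by
      rw [Fintype.sum_prod_type, Fintype.sum_bool, ← Finset.sum_add_distrib]
      have step : ∀ a : Fin N → Bool,
          Ef (true, a) + Ef (false, a) = ((‖w a‖ / S : ℝ) : ℂ) • 1 := by
        intro a
        simp only [hEfdef, if_true, if_false]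
        push_cast
        have h2S : (S : ℂ) ≠ 0 := by exact_mod_cast hS
        try field_simp
        module
      rw [Finset.sum_congr rfl fun a _ => step a, ← Finset.sum_smul]
      have hc : (∑ a : Fin N → Bool, ((‖w a‖ / S : ℝ) : ℂ)) = 1 := by
        rw [← Complex.ofReal_sum, ← Finset.sum_div, ← hSdef, div_self hS]
        norm_num
      rw [hc, one_smul]
    refine ⟨L, fun lam => Ef (e.symm lam), fun b y lam => pf b y (e.symm lam),
      fun lam => hpsd _, ?_, fun b y lam => hpos b y _, fun y lam => hones y _, ?_⟩
    · rw [Equiv.sum_comp e.symm Ef]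
      exact hsum1
    · -- recover M
      intro b y
      show M b y = ∑ lam : Fin L, ((pf b y (e.symm lam) : ℝ) : ℂ) • Ef (e.symm lam)
      rw [Equiv.sum_comp e.symm (fun i => ((pf b y i : ℝ) : ℂ) • Ef i)]
      have h2S : (S : ℂ) ≠ 0 := by exact_mod_cast hS
      have hbulk : ∑ i : Bool × (Fin N → Bool), ((pf b y i : ℝ) : ℂ) • Ef i
          = ((1:ℂ)/2) • 1
            + (((if b then 1 else (-1:ℝ)) : ℝ) / 2 : ℂ) • pauliDot (m y) := by
        rw [Fintype.sum_prod_type, Fintype.sum_bool, ← Finset.sum_add_distrib]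
        have step2 : ∀ a : Fin N → Bool,
            ((pf b y (true, a) : ℝ) : ℂ) • Ef (true, a)
              + ((pf b y (false, a) : ℝ) : ℂ) • Ef (false, a)
            = ((‖w a‖ / (2*S) : ℝ) : ℂ) • 1
              + (((if b then 1 else (-1:ℝ)) * t / (2*S) : ℝ) : ℂ)
                • pauliDot ((if a y then (-1:ℝ) else 1) • w a) := by
          intro a
          simp only [hpfdef, hEfdef, if_true, if_false]
          rw [pauliDot_smul]
          push_cast
          have h2S : (S : ℂ) ≠ 0 := by exact_mod_cast hS
          by_cases hb : b <;> by_cases ha : a y <;> simp only [hb, ha, if_true, if_false] <;>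
            · try field_simp
              try module
              try ring
        rw [Finset.sum_congr rfl fun a _ => step2 a, Finset.sum_add_distrib,
          ← Finset.sum_smul, ← Finset.smul_sum]
        have c1 : (∑ a : Fin N → Bool, ((‖w a‖ / (2*S) : ℝ) : ℂ)) = 1/2 := by
          rw [← Complex.ofReal_sum, ← Finset.sum_div, ← hSdef]
          rw [show S / (2*S) = 1/2 by field_simp; try ring]
          norm_num
        have c2 : ∑ a : Fin N → Bool, pauliDot ((if a y then (-1:ℝ) else 1) • w a)
            = ((2^N : ℝ) : ℂ) • pauliDot (m y) := by
          rw [← pauliDot_sum]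
          have : ∑ a : Fin N → Bool, (if a y then (-1:ℝ) else 1) • w a = (2^N : ℝ) • m y :=
            horth y
          rw [this, pauliDot_smul]
        rw [c1, c2, smul_smul]
        congr 1
        congr 1
        have htC : ((t : ℂ)) * ((2:ℂ)^N) = (S : ℂ) := by exact_mod_cast htS
        by_cases hb : b <;> simp only [hb, if_true, if_false] <;> push_cast <;> field_simp <;>
          rw [← htC]
      rw [hM b y, hbulk]
      by_cases hb : b <;> simp only [hb, if_true, if_false] <;> push_cast <;> module
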